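/- arXiv:0704.3250 — 2 statements merged into one kernel-verified Lean document; each statement's English description precedes it below -/
import Mathlib

section
/- For a solution of the same Lorentz equations in a dipole field, the quantity p_φ = (x y' − y x') + α (x²+y²)/r³ (with r = √(x²+y²+z²)) is constant in time. -/
/-! The torque about the dipole axis, computed from the equations of motion, is
`x y'' - y x'' = α (x x' + y y') / r³ - 3 α z (z (x x' + y y') - z' (x² + y²)) / r⁵`,
and this is exactly `-α d/dt [(x² + y²) / r³]` once `r r' = x x' + y y' + z z'` and
`r² = x² + y² + z²` are used. -/

open Real

theorem hasDerivAt_mul_deriv_sub_mul_deriv {𝕜 : Type*} [NontriviallyNormedField 𝕜]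
    {x y : 𝕜 → 𝕜} (hx : ContDiff 𝕜 2 x) (hy : ContDiff 𝕜 2 y) (t : 𝕜) :
    HasDerivAt (fun s => x s * deriv y s - y s * deriv x s)
      (x t * deriv (deriv y) t - y t * deriv (deriv x) t) t := by
  have h := ((hx.differentiable two_ne_zero t).hasDerivAt.mul
    (hy.differentiable_deriv_two t).hasDerivAt).sub
    ((hy.differentiable two_ne_zero t).hasDerivAt.mul (hx.differentiable_deriv_two t).hasDerivAt)
  exact h.congr_deriv (by ring)

section

variable {x y z r : ℝ → ℝ} {x' y' z' r' t : ℝ}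

theorem HasDerivAt.sqrt_sq_add_sq_add_sq (hx : HasDerivAt x x' t) (hy : HasDerivAt y y' t)
    (hz : HasDerivAt z z' t) (hpos : 0 < x t ^ 2 + y t ^ 2 + z t ^ 2) :
    HasDerivAt (fun s => √(x s ^ 2 + y s ^ 2 + z s ^ 2))
      ((x t * x' + y t * y' + z t * z') / √(x t ^ 2 + y t ^ 2 + z t ^ 2)) t := by
  have hsum : HasDerivAt (fun s => x s ^ 2 + y s ^ 2 + z s ^ 2)
      (2 * (x t * x' + y t * y' + z t * z')) t :=
    (((hx.fun_pow 2).fun_add (hy.fun_pow 2)).fun_add (hz.fun_pow 2)).congr_deriv (by ring)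
  refine (hsum.sqrt hpos.ne').congr_deriv ?_
  field_simp

theorem HasDerivAt.const_mul_sq_add_sq_div_pow_three (c : ℝ) (hx : HasDerivAt x x' t)
    (hy : HasDerivAt y y' t) (hr : HasDerivAt r r' t) (hr0 : r t ≠ 0) :
    HasDerivAt (fun s => c * (x s ^ 2 + y s ^ 2) / r s ^ 3)
      (c * (2 * (x t * x' + y t * y') * r t - 3 * (x t ^ 2 + y t ^ 2) * r') / r t ^ 4) t := by
  have h := (((hx.fun_pow 2).fun_add (hy.fun_pow 2)).const_mul c).fun_div (hr.fun_pow 3)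
    (pow_ne_zero 3 hr0)
  refine h.congr_deriv ?_
  field_simp
  ring

end

theorem lorentz_angular_momentum_conserved_general
    (α : ℝ) (x y z : ℝ → ℝ)
    (hx : ContDiff ℝ 2 x) (hy : ContDiff ℝ 2 y) (hz : ContDiff ℝ 2 z)
    (r : ℝ → ℝ) (hr : ∀ t, r t = Real.sqrt ((x t)^2 + (y t)^2 + (z t)^2))
    (hrpos : ∀ t, 0 < r t)
    (hodex : ∀ t, deriv (deriv x) t =
      3 * α * (z t) * (deriv y t * z t - deriv z t * y t) / (r t)^5
        - α * deriv y t / (r t)^3)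
    (hodey : ∀ t, deriv (deriv y) t =
      -3 * α * (z t) * (deriv x t * z t - deriv z t * x t) / (r t)^5
        + α * deriv x t / (r t)^3) :
    ∀ t, deriv (fun s => x s * deriv y s - y s * deriv x s
      + α * ((x s)^2 + (y s)^2) / (r s)^3) t = 0 := by
  intro t
  have hr0 : r t ≠ 0 := (hrpos t).ne'
  have hx' := (hx.differentiable two_ne_zero t).hasDerivAt
  have hy' := (hy.differentiable two_ne_zero t).hasDerivAt
  have hz' := (hz.differentiable two_ne_zero t).hasDerivAt
  have hr_sq : r t ^ 2 = x t ^ 2 + y t ^ 2 + z t ^ 2 := by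
    rw [hr, sq_sqrt (by positivity)]
  have hr' : HasDerivAt r
      ((x t * deriv x t + y t * deriv y t + z t * deriv z t) / r t) t := by
    simpa only [← hr] using hx'.sqrt_sq_add_sq_add_sq hy' hz' (hr_sq ▸ pow_pos (hrpos t) 2)
  have hdipole := hx'.const_mul_sq_add_sq_div_pow_three α hy' hr' hr0
  rw [((hasDerivAt_mul_deriv_sub_mul_deriv hx hy t).fun_add hdipole).deriv, hodex, hodey]
  field_simp
  linear_combination (3 * α * (x t * deriv x t + y t * deriv y t)) * hr_sq

theorem lorentz_angular_momentum_conserved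
    (α : ℝ) (x y z : ℝ → ℝ)
    (hx : ContDiff ℝ 2 x) (hy : ContDiff ℝ 2 y) (hz : ContDiff ℝ 2 z)
    (r : ℝ → ℝ) (hr : ∀ t, r t = Real.sqrt ((x t)^2 + (y t)^2 + (z t)^2))
    (hrpos : ∀ t, 0 < r t)
    (hodex : ∀ t, deriv (deriv x) t =
      3 * α * (z t) * (deriv y t * z t - deriv z t * y t) / (r t)^5
        - α * deriv y t / (r t)^3)
    (hodey : ∀ t, deriv (deriv y) t =
      -3 * α * (z t) * (deriv x t * z t - deriv z t * x t) / (r t)^5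
        + α * deriv x t / (r t)^3)
    (hodez : ∀ t, deriv (deriv z) t =
      3 * α * (z t) * (deriv x t * y t - deriv y t * x t) / (r t)^5) :
    ∀ t, deriv (fun s => x s * deriv y s - y s * deriv x s
      + α * ((x s)^2 + (y s)^2) / (r s)^3) t = 0 :=
  lorentz_angular_momentum_conserved_general α x y z hx hy hz r hr hrpos hodex hodey
end

section
/- On (ρ₀, ρ₂) with ρ₀ = 2(√2−1)mα/c and ρ₂ = 2mα/c, the effective potential V satisfies V(ρ) < V(ρ₂) for all ρ ∈ (ρ₀, ρ₂), and V(ρ₀) = V(ρ₂). -/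
theorem stormer_well_below_max
    (m α c : ℝ) (hm : 0 < m) (hα : 0 < α) (hc : 0 < c)
    (V : ℝ → ℝ)
    (hV : ∀ ρ : ℝ, V ρ = c^2 / (2 * m^2 * ρ^2) - (α * c / m) / ρ^3 + α^2 / (2 * ρ^4)) :
    (∀ ρ ∈ Set.Ioo (2 * (Real.sqrt 2 - 1) * m * α / c) (2 * m * α / c),
      V ρ < V (2 * m * α / c)) ∧
    V (2 * (Real.sqrt 2 - 1) * m * α / c) = V (2 * m * α / c) := by
  have h2 : Real.sqrt 2 ^ 2 = 2 := Real.sq_sqrt (by norm_num)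
  have h1 : 1 < Real.sqrt 2 := by nlinarith [Real.sqrt_nonneg 2]
  have hmα : 0 < m * α := mul_pos hm hα
  have h0 : 0 < 2 * (Real.sqrt 2 - 1) * m * α / c := div_pos (by nlinarith) hc
  have key : ∀ ρ : ℝ, 0 < ρ → V ρ =
      (16*c^2*m^2*α^2*ρ^2 - 32*m^3*α^3*c*ρ + 16*m^4*α^4) / (32*m^4*α^2*ρ^4) := by
    intro ρ hρ
    rw [hV]
    field_simp
    ring
  have hVmax : V (2 * m * α / c) = c^4 / (32 * m^4 * α^2) := by
    rw [hV]
    field_simp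
    ring
  constructor
  · intro ρ hρ
    obtain ⟨hρ1, hρ2⟩ := hρ
    have hρpos : 0 < ρ := lt_trans h0 hρ1
    have hs1 : 2 * (Real.sqrt 2 - 1) * m * α < c * ρ := by
      rw [div_lt_iff₀ hc] at hρ1; linarith
    have hs2 : c * ρ < 2 * m * α := by
      rw [lt_div_iff₀ hc] at hρ2; linarith
    rw [key ρ hρpos, hVmax]
    have e2 : c^4 / (32 * m^4 * α^2) = (c^4*ρ^4) / (32*m^4*α^2*ρ^4) := by
      rw [div_eq_div_iff (by positivity) (by positivity)]; ring
    rw [e2, div_lt_div_iff₀ (by positivity) (by positivity)]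
    have hA : 0 < (2*m*α - c*ρ)^2 := pow_pos (by linarith) 2
    have hB : 0 < c^2*ρ^2 + 4*m*α*c*ρ - 4*m^2*α^2 := by
      have hfac : (c*ρ - 2*(Real.sqrt 2 - 1)*m*α) * (c*ρ + 2*(Real.sqrt 2 + 1)*m*α)
          = c^2*ρ^2 + 4*m*α*c*ρ - 4*m^2*α^2 := by
        linear_combination (-4*m^2*α^2) * h2
      rw [← hfac]
      exact mul_pos (by linarith) (by nlinarith)
    nlinarith [mul_pos (mul_pos hA hB) (show (0:ℝ) < 32*m^4*α^2*ρ^4 by positivity)]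
  · set r := 2 * (Real.sqrt 2 - 1) * m * α / c with hrdef
    have hr : c * r = 2 * (Real.sqrt 2 - 1) * m * α := by
      rw [hrdef]; field_simp
    have hs2 : (c*r)^2 = 4*(3 - 2*Real.sqrt 2)*m^2*α^2 := by
      linear_combination (c*r + 2*(Real.sqrt 2 - 1)*m*α) * hr + 4*m^2*α^2 * h2
    have hs4 : (c*r)^4 = 16*(17 - 12*Real.sqrt 2)*m^4*α^4 := by
      linear_combination ((c*r)^2 + 4*(3 - 2*Real.sqrt 2)*m^2*α^2) * hs2 + 64*m^4*α^4 * h2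
    rw [hVmax, key r h0, div_eq_div_iff (by positivity) (by positivity)]
    linear_combination (32*m^4*α^2) * (16*m^2*α^2*hs2 - 32*m^3*α^3*hr - hs4)
end
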